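/- For every real α ≠ 1, every natural number k, every ℓ with 0 ≤ ℓ ≤ k, and all positive real numbers r_0, …, r_{k+1} with r_ℓ ≠ r_{ℓ+1}, one has [ I_{α,k}(r_0, …, r̂_ℓ, …, r_{k+1}) − I_{α,k}(r_0, …, r̂_{ℓ+1}, …, r_{k+1}) ] / (r_{ℓ+1} − r_ℓ) = −α · I_{α+1,k+1}(r_0, …, r_{k+1}). -/

import Mathlib

open MeasureTheory

noncomputable section

/-- The simplex `Δ_k = {s ∈ ℝ^k : 0 ≤ s_k ≤ … ≤ s_1 ≤ 1}`, with zero-based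
coordinates: `s i` is `s_{i+1}`. -/
def simplexSet (k : ℕ) : Set (Fin k → ℝ) :=
  {s | (∀ i : Fin k, 0 ≤ s i ∧ s i ≤ 1) ∧ ∀ i j : Fin k, i ≤ j → s j ≤ s i}

/-- Extension of `s ∈ Δ_k` by the conventions `s_0 := 1` and `s_j := 0` for `j ≥ k+1`. -/
def sext (k : ℕ) (s : Fin k → ℝ) (j : ℕ) : ℝ :=
  if j = 0 then 1 else if h : j - 1 < k then s ⟨j - 1, h⟩ else 0

/-- The weight `Σ_{ℓ=0}^{k} (s_ℓ − s_{ℓ+1}) r_ℓ`. -/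
def wsum (k : ℕ) (s : Fin k → ℝ) (r : ℕ → ℝ) : ℝ :=
  ∑ ℓ ∈ Finset.range (k + 1), (sext k s ℓ - sext k s (ℓ + 1)) * r ℓ

/-- The universal spectral function
`I_{α,k}(r_0,…,r_k) = ∫_{Δ_k} (Σ_ℓ (s_ℓ−s_{ℓ+1}) r_ℓ)^{−α} ds`. -/
def Ifun (α : ℝ) (k : ℕ) (r : ℕ → ℝ) : ℝ :=
  ∫ s in simplexSet k, (wsum k s r) ^ (-α)

/-- `Ĩ_k(r_0,…,r_k) = ∫_{Δ_k} exp(−Σ_ℓ (s_ℓ−s_{ℓ+1}) r_ℓ) ds`. -/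
def Itilde (k : ℕ) (r : ℕ → ℝ) : ℝ :=
  ∫ s in simplexSet k, Real.exp (-(wsum k s r))

/-! ### Auxiliary lemmas -/

lemma isClosed_simplexSet (k : ℕ) : IsClosed (simplexSet k) := by
  have h1 : IsClosed {s : Fin k → ℝ | ∀ i : Fin k, 0 ≤ s i ∧ s i ≤ 1} := by
    have : {s : Fin k → ℝ | ∀ i : Fin k, 0 ≤ s i ∧ s i ≤ 1}
        = ⋂ i : Fin k, ({s : Fin k → ℝ | 0 ≤ s i} ∩ {s | s i ≤ 1}) := by
      ext s; simp [Set.mem_iInter, forall_and]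
    rw [this]
    exact isClosed_iInter fun i =>
      ((isClosed_le continuous_const (continuous_apply i)).inter
        (isClosed_le (continuous_apply i) continuous_const))
  have h2 : IsClosed {s : Fin k → ℝ | ∀ i j : Fin k, i ≤ j → s j ≤ s i} := by
    have : {s : Fin k → ℝ | ∀ i j : Fin k, i ≤ j → s j ≤ s i}
        = ⋂ (i : Fin k) (j : Fin k) (_ : i ≤ j), {s : Fin k → ℝ | s j ≤ s i} := by
      ext s; simp [Set.mem_iInter]
    rw [this]
    exact isClosed_iInter fun i => isClosed_iInter fun j => isClosed_iInter fun _ =>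
      isClosed_le (continuous_apply j) (continuous_apply i)
  exact h1.inter h2

lemma measurableSet_simplexSet (k : ℕ) : MeasurableSet (simplexSet k) :=
  (isClosed_simplexSet k).measurableSet

lemma isCompact_simplexSet (k : ℕ) : IsCompact (simplexSet k) := by
  refine IsCompact.of_isClosed_subset (isCompact_univ_pi fun i : Fin k =>
    isCompact_Icc (a := (0:ℝ)) (b := 1)) (isClosed_simplexSet k) ?_
  intro s hs
  simp only [Set.mem_univ_pi, Set.mem_Icc]
  exact fun i => hs.1 i

lemma sext_antitone {k : ℕ} {s : Fin k → ℝ} (hs : s ∈ simplexSet k) :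
    ∀ m n : ℕ, m ≤ n → sext k s n ≤ sext k s m := by
  intro m n hmn
  unfold sext
  rcases Nat.eq_zero_or_pos m with hm | hm
  · subst hm
    simp only [if_pos rfl]
    rcases Nat.eq_zero_or_pos n with hn | hn
    · simp [hn]
    · rw [if_neg (by omega)]
      split
      · exact (hs.1 _).2
      · norm_num
  · rw [if_neg (by omega), if_neg (by omega)]
    by_cases hn : n - 1 < k
    · rw [dif_pos hn, dif_pos (by omega)]
      exact hs.2 _ _ (by simp [Fin.le_def]; omega)
    · rw [dif_neg hn]
      split
      · exact (hs.1 _).1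
      · exact le_refl 0

lemma mem_simplexSet_iff_sext {k : ℕ} {s : Fin k → ℝ} :
    s ∈ simplexSet k ↔ ∀ m n : ℕ, m ≤ n → sext k s n ≤ sext k s m := by
  constructor
  · exact fun hs => sext_antitone hs
  · intro h
    constructor
    · intro i
      constructor
      · have := h (i.val + 1) (k + 1) (by omega)
        rw [sext, sext, if_neg (by omega), if_neg (by omega), dif_neg (by omega),
          dif_pos (by omega : i.val + 1 - 1 < k)] at this
        simpa using this
      · have := h 0 (i.val + 1) (by omega)
        rw [sext, sext, if_pos rfl, if_neg (by omega),
          dif_pos (by omega : i.val + 1 - 1 < k)] at this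
        simpa using this
    · intro i j hij
      have := h (i.val + 1) (j.val + 1) (by simp only [Fin.le_def] at hij; omega)
      rw [sext, sext, if_neg (by omega), if_neg (by omega),
        dif_pos (by omega : i.val + 1 - 1 < k), dif_pos (by omega : j.val + 1 - 1 < k)] at this
      simpa using this
lemma insertNth_apply_lt {k ℓ : ℕ} (hℓ : ℓ ≤ k) (t : ℝ) (s : Fin k → ℝ)
    {j : Fin (k + 1)} (h : j.val < ℓ) :
    ((⟨ℓ, by omega⟩ : Fin (k + 1)).insertNth t s : Fin (k + 1) → ℝ) j = s ⟨j.val, by omega⟩ := by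
  set i : Fin (k + 1) := ⟨ℓ, by omega⟩ with hi
  have hj : j = i.succAbove ⟨j.val, by omega⟩ := by
    rw [Fin.succAbove_of_castSucc_lt]
    · ext; simp
    · simp only [Fin.lt_def, hi, Fin.coe_castSucc]; exact h
  conv_lhs => rw [hj]
  rw [Fin.insertNth_apply_succAbove]

lemma insertNth_apply_eq {k ℓ : ℕ} (hℓ : ℓ ≤ k) (t : ℝ) (s : Fin k → ℝ)
    {j : Fin (k + 1)} (h : j.val = ℓ) :
    ((⟨ℓ, by omega⟩ : Fin (k + 1)).insertNth t s : Fin (k + 1) → ℝ) j = t := by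
  rcases j with ⟨v, hv⟩
  simp only at h
  subst h
  exact Fin.insertNth_apply_same _ _ _

lemma insertNth_apply_gt {k ℓ : ℕ} (hℓ : ℓ ≤ k) (t : ℝ) (s : Fin k → ℝ)
    {j : Fin (k + 1)} (h : ℓ < j.val) :
    ((⟨ℓ, by omega⟩ : Fin (k + 1)).insertNth t s : Fin (k + 1) → ℝ) j = s ⟨j.val - 1, by omega⟩ := by
  set i : Fin (k + 1) := ⟨ℓ, by omega⟩ with hi
  have hj : j = i.succAbove ⟨j.val - 1, by omega⟩ := by
    rw [Fin.succAbove_of_le_castSucc]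
    · ext; simp only [Fin.val_succ]; omega
    · simp only [Fin.le_def, hi, Fin.coe_castSucc]; omega
  conv_lhs => rw [hj]
  rw [Fin.insertNth_apply_succAbove]

lemma sext_insertNth {k ℓ : ℕ} (hℓ : ℓ ≤ k) (t : ℝ) (s : Fin k → ℝ) (m : ℕ) :
    sext (k + 1) ((⟨ℓ, by omega⟩ : Fin (k + 1)).insertNth t s) m =
      if m ≤ ℓ then sext k s m
      else if m = ℓ + 1 then t
      else sext k s (m - 1) := by
  rcases Nat.eq_zero_or_pos m with hm | hm
  · subst hm
    simp [sext]
  · rw [sext, if_neg (by omega)]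
    by_cases h1 : m - 1 < k + 1
    · rcases lt_trichotomy (m - 1) ℓ with h | h | h
      · rw [dif_pos h1, insertNth_apply_lt hℓ t s (by simpa using h), if_pos (by omega),
          sext, if_neg (by omega), dif_pos (by omega)]
      · rw [dif_pos h1, insertNth_apply_eq hℓ t s (by simpa using h), if_neg (by omega),
          if_pos (by omega)]
      · rw [dif_pos h1, insertNth_apply_gt hℓ t s (by simpa using h), if_neg (by omega),
          if_neg (by omega), sext, if_neg (by omega), dif_pos (by omega : m - 1 - 1 < k)]
    · rw [dif_neg h1, if_neg (by omega), if_neg (by omega), sext, if_neg (by omega),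
        dif_neg (by omega)]

lemma wsum_insertNth {k ℓ : ℕ} (hℓ : ℓ ≤ k) (t : ℝ) (s : Fin k → ℝ) (r : ℕ → ℝ) :
    wsum (k + 1) ((⟨ℓ, by omega⟩ : Fin (k + 1)).insertNth t s) r
      = wsum k s (fun m => if m < ℓ + 1 then r m else r (m + 1))
        + (t - sext k s (ℓ + 1)) * (r (ℓ + 1) - r ℓ) := by
  classical
  set S : ℕ → ℝ := sext k s with hS
  set X : ℕ → ℝ := sext (k + 1) ((⟨ℓ, by omega⟩ : Fin (k + 1)).insertNth t s) with hXdef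
  have hX : ∀ m, X m = if m ≤ ℓ then S m else if m = ℓ + 1 then t else S (m - 1) :=
    fun m => sext_insertNth hℓ t s m
  set r1 : ℕ → ℝ := fun m => if m < ℓ + 1 then r m else r (m + 1) with hr1
  set F : ℕ → ℝ := fun m => (X m - X (m + 1)) * r m with hF
  set G : ℕ → ℝ := fun m => (S m - S (m + 1)) * r1 m with hG
  have key1 : ∀ m < ℓ, F m = G m := by
    intro m hm
    simp only [hF, hG, hr1]
    rw [hX m, hX (m + 1), if_pos (by omega), if_pos (by omega), if_pos (by omega)]
  have key2 : ∀ i, F (ℓ + i + 2) = G (ℓ + i + 1) := by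
    intro i
    simp only [hF, hG, hr1]
    rw [hX (ℓ + i + 2), hX (ℓ + i + 2 + 1), if_neg (by omega), if_neg (by omega),
      if_neg (by omega), if_neg (by omega), if_neg (by omega)]
    have e1 : ℓ + i + 2 - 1 = ℓ + i + 1 := by omega
    have e2 : ℓ + i + 2 + 1 - 1 = ℓ + i + 2 := by omega
    have e3 : ℓ + i + 1 + 1 = ℓ + i + 2 := by omega
    have e4 : ℓ + i + 2 = ℓ + i + 1 + 1 := by omega
    rw [e1, e2, e3, ← e4]
  have keyF0 : F ℓ = (S ℓ - t) * r ℓ := by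
    simp only [hF]
    rw [hX ℓ, hX (ℓ + 1), if_pos le_rfl, if_neg (by omega), if_pos rfl]
  have keyF1 : F (ℓ + 1) = (t - S (ℓ + 1)) * r (ℓ + 1) := by
    simp only [hF]
    rw [hX (ℓ + 1), hX (ℓ + 1 + 1), if_neg (by omega), if_pos rfl, if_neg (by omega),
      if_neg (by omega)]
    have : ℓ + 1 + 1 - 1 = ℓ + 1 := by omega
    rw [this]
  have keyG0 : G ℓ = (S ℓ - S (ℓ + 1)) * r ℓ := by
    simp only [hG, hr1]
    rw [if_pos (by omega)]
  have hL : wsum (k + 1) ((⟨ℓ, by omega⟩ : Fin (k + 1)).insertNth t s) r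
      = ∑ m ∈ Finset.range ℓ, F m
        + ((∑ i ∈ Finset.range (k - ℓ), F (ℓ + i + 2)) + F (ℓ + 1) + F ℓ) := by
    rw [wsum]
    rw [← Finset.sum_range_add_sum_Ico F (show ℓ ≤ k + 1 + 1 by omega)]
    rw [Finset.sum_Ico_eq_sum_range]
    have hn : k + 1 + 1 - ℓ = (k - ℓ) + 1 + 1 := by omega
    rw [hn, Finset.sum_range_succ', Finset.sum_range_succ']
    have : ∀ i, ℓ + (i + 1 + 1) = ℓ + i + 2 := fun i => by omega
    simp only [this, Nat.add_zero, Nat.add_comm ℓ 1]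
    try ring_nf
  have hR : wsum k s r1
      = ∑ m ∈ Finset.range ℓ, G m
        + ((∑ i ∈ Finset.range (k - ℓ), G (ℓ + i + 1)) + G ℓ) := by
    rw [wsum]
    rw [← Finset.sum_range_add_sum_Ico G (show ℓ ≤ k + 1 by omega)]
    rw [Finset.sum_Ico_eq_sum_range]
    have hn : k + 1 - ℓ = (k - ℓ) + 1 := by omega
    rw [hn, Finset.sum_range_succ']
    have : ∀ i, ℓ + (i + 1) = ℓ + i + 1 := fun i => by omega
    simp only [this, Nat.add_zero]
  rw [hL, hR, Finset.sum_congr rfl (fun m hm => key1 m (Finset.mem_range.mp hm)),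
    Finset.sum_congr rfl (fun i _ => key2 i), keyF0, keyF1, keyG0]
  ring

lemma wsum_hat_sub {k ℓ : ℕ} (hℓ : ℓ ≤ k) (s : Fin k → ℝ) (r : ℕ → ℝ) :
    wsum k s (fun m => if m < ℓ then r m else r (m + 1))
      = wsum k s (fun m => if m < ℓ + 1 then r m else r (m + 1))
        + (sext k s ℓ - sext k s (ℓ + 1)) * (r (ℓ + 1) - r ℓ) := by
  classical
  unfold wsum
  have hterm : ∀ m ∈ Finset.range (k + 1),
      (sext k s m - sext k s (m + 1)) * (fun m => if m < ℓ then r m else r (m + 1)) m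
        = (sext k s m - sext k s (m + 1)) * (fun m => if m < ℓ + 1 then r m else r (m + 1)) m
          + (if m = ℓ then (sext k s ℓ - sext k s (ℓ + 1)) * (r (ℓ + 1) - r ℓ) else 0) := by
    intro m _
    simp only
    rcases lt_trichotomy m ℓ with h | h | h
    · rw [if_pos h, if_pos (by omega), if_neg (by omega)]; ring
    · subst h; rw [if_neg (by omega), if_pos (by omega), if_pos rfl]; ring
    · rw [if_neg (by omega), if_neg (by omega), if_neg (by omega)]; ring
  rw [Finset.sum_congr rfl hterm, Finset.sum_add_distrib,
    Finset.sum_ite_eq' (Finset.range (k + 1)) ℓ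
      (fun _ => (sext k s ℓ - sext k s (ℓ + 1)) * (r (ℓ + 1) - r ℓ)),
    if_pos (Finset.mem_range.mpr (by omega))]

lemma wsum_continuous (k : ℕ) (r : ℕ → ℝ) : Continuous fun s : Fin k → ℝ => wsum k s r := by
  unfold wsum
  refine continuous_finset_sum _ fun m _ => Continuous.mul ?_ continuous_const
  refine Continuous.sub ?_ ?_ <;>
  · unfold sext
    split
    · exact continuous_const
    · split
      · exact continuous_apply _
      · exact continuous_const

lemma wsum_pos {k : ℕ} {s : Fin k → ℝ} {r : ℕ → ℝ} (hs : s ∈ simplexSet k)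
    (hr : ∀ j ≤ k, 0 < r j) : 0 < wsum k s r := by
  classical
  have hne : (Finset.range (k + 1)).Nonempty := ⟨0, by simp⟩
  set c : ℝ := (Finset.range (k + 1)).inf' hne r with hc
  have hcpos : 0 < c := by
    obtain ⟨j, hj, hje⟩ := Finset.exists_mem_eq_inf' hne r
    rw [hc, hje]
    exact hr j (by simpa using Nat.lt_succ_iff.mp (Finset.mem_range.mp hj))
  have hsum : ∑ m ∈ Finset.range (k + 1), (sext k s m - sext k s (m + 1)) = 1 := by
    rw [Finset.sum_range_sub' (fun m => sext k s m)]
    have h0 : sext k s 0 = 1 := by simp [sext]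
    have hk : sext k s (k + 1) = 0 := by simp [sext]
    rw [h0, hk]; ring
  have hge : c ≤ wsum k s r := by
    calc c = ∑ m ∈ Finset.range (k + 1), (sext k s m - sext k s (m + 1)) * c := by
            rw [← Finset.sum_mul, hsum, one_mul]
      _ ≤ ∑ m ∈ Finset.range (k + 1), (sext k s m - sext k s (m + 1)) * r m := by
            refine Finset.sum_le_sum fun m hm => ?_
            have hcoeff : 0 ≤ sext k s m - sext k s (m + 1) :=
              sub_nonneg.mpr (sext_antitone hs m (m + 1) (by omega))
            exact mul_le_mul_of_nonneg_left (Finset.inf'_le r hm) hcoeff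
      _ = wsum k s r := rfl
  linarith

lemma insertNth_mem_simplexSet_iff {k ℓ : ℕ} (hℓ : ℓ ≤ k) (t : ℝ) (s : Fin k → ℝ) :
    (⟨ℓ, by omega⟩ : Fin (k + 1)).insertNth t s ∈ simplexSet (k + 1)
      ↔ s ∈ simplexSet k ∧ t ∈ Set.Icc (sext k s (ℓ + 1)) (sext k s ℓ) := by
  have hX : ∀ m, sext (k + 1) ((⟨ℓ, by omega⟩ : Fin (k + 1)).insertNth t s) m
      = if m ≤ ℓ then sext k s m else if m = ℓ + 1 then t else sext k s (m - 1) :=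
    fun m => sext_insertNth hℓ t s m
  rw [mem_simplexSet_iff_sext]
  constructor
  · intro A
    have hXS : ∀ m, sext (k + 1) ((⟨ℓ, by omega⟩ : Fin (k + 1)).insertNth t s)
        (if m ≤ ℓ then m else m + 1) = sext k s m := by
      intro m
      by_cases h : m ≤ ℓ
      · rw [if_pos h, hX, if_pos h]
      · rw [if_neg h, hX, if_neg (by omega), if_neg (by omega), Nat.add_sub_cancel]
    refine ⟨mem_simplexSet_iff_sext.mpr fun m n hmn => ?_, ?_, ?_⟩
    · rw [← hXS m, ← hXS n]
      refine A _ _ ?_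
      split_ifs <;> omega
    · have := A (ℓ + 1) (ℓ + 2) (by omega)
      rw [hX (ℓ + 1), hX (ℓ + 2), if_neg (by omega), if_pos rfl, if_neg (by omega),
        if_neg (by omega)] at this
      simpa using this
    · have := A ℓ (ℓ + 1) (by omega)
      rw [hX (ℓ + 1), hX ℓ, if_neg (by omega), if_pos rfl, if_pos le_rfl] at this
      exact this
  · rintro ⟨hs, ha, hb⟩
    have hA := sext_antitone hs
    intro m n hmn
    rw [hX m, hX n]
    split_ifs <;>
      first
        | (exfalso; omega)
        | exact hA _ _ (by omega)
        | exact le_trans hb (hA _ _ (by omega))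
        | exact le_rfl
        | exact le_trans (hA _ _ (by omega)) ha

lemma integrableOn_rpow_wsum {k : ℕ} {r : ℕ → ℝ} (hr : ∀ j ≤ k, 0 < r j) (β : ℝ) :
    IntegrableOn (fun s => wsum k s r ^ β) (simplexSet k) := by
  refine ContinuousOn.integrableOn_compact (isCompact_simplexSet k) ?_
  refine ContinuousOn.rpow_const (wsum_continuous k r).continuousOn fun s hs => ?_
  exact Or.inl (ne_of_gt (wsum_pos hs hr))

lemma fubini_simplex {k ℓ : ℕ} (hℓ : ℓ ≤ k) (f : (Fin (k + 1) → ℝ) → ℝ)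
    (hf : IntegrableOn f (simplexSet (k + 1))) :
    ∫ x in simplexSet (k + 1), f x
      = ∫ s in simplexSet k, ∫ t in Set.Icc (sext k s (ℓ + 1)) (sext k s ℓ),
          f ((⟨ℓ, by omega⟩ : Fin (k + 1)).insertNth t s) := by
  classical
  set i : Fin (k + 1) := ⟨ℓ, by omega⟩ with hi
  set e := (MeasurableEquiv.piFinSuccAbove (fun _ : Fin (k + 1) => ℝ) i).symm with he
  have hem : MeasurePreserving e :=
    (volume_preserving_piFinSuccAbove (fun _ : Fin (k + 1) => ℝ) i).symm _
  set g : (Fin (k + 1) → ℝ) → ℝ := (simplexSet (k + 1)).indicator f with hg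
  have hgi : Integrable g :=
    (integrable_indicator_iff (measurableSet_simplexSet _)).mpr hf
  have hep : ∀ p : ℝ × (Fin k → ℝ), e p = i.insertNth p.1 p.2 := by
    intro p
    simp [he, MeasurableEquiv.piFinSuccAbove_symm_apply, Fin.insertNthEquiv]
  have h1 : ∫ x in simplexSet (k + 1), f x = ∫ x, g x :=
    (integral_indicator (measurableSet_simplexSet _)).symm
  have h2 : ∫ x, g x = ∫ p : ℝ × (Fin k → ℝ), g (e p) :=
    (hem.integral_comp e.measurableEmbedding g).symm
  have hgint : Integrable (fun p : ℝ × (Fin k → ℝ) => g (e p)) :=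
    (hem.integrable_comp_emb e.measurableEmbedding).mpr hgi
  rw [Measure.volume_eq_prod] at hgint
  have h3 : ∫ p : ℝ × (Fin k → ℝ), g (e p) = ∫ s : Fin k → ℝ, ∫ t : ℝ, g (e (t, s)) := by
    rw [Measure.volume_eq_prod]
    exact integral_prod_symm _ hgint
  have h4 : ∀ s : Fin k → ℝ, (∫ t : ℝ, g (e (t, s)))
      = Set.indicator (simplexSet k)
          (fun s' => ∫ t in Set.Icc (sext k s' (ℓ + 1)) (sext k s' ℓ), f (i.insertNth t s')) s := by
    intro s
    by_cases hs : s ∈ simplexSet k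
    · rw [Set.indicator_of_mem hs, ← integral_indicator measurableSet_Icc]
      congr 1
      funext t
      rw [hep (t, s)]
      by_cases ht : t ∈ Set.Icc (sext k s (ℓ + 1)) (sext k s ℓ)
      · rw [Set.indicator_of_mem ht, hg, Set.indicator_of_mem]
        exact (insertNth_mem_simplexSet_iff hℓ t s).mpr ⟨hs, ht⟩
      · rw [Set.indicator_of_notMem ht, hg, Set.indicator_of_notMem]
        intro hmem
        exact ht ((insertNth_mem_simplexSet_iff hℓ t s).mp hmem).2
    · have hz : ∀ t : ℝ, g (e (t, s)) = 0 := by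
        intro t
        rw [hep (t, s), hg, Set.indicator_of_notMem]
        intro hmem
        exact hs ((insertNth_mem_simplexSet_iff hℓ t s).mp hmem).1
      rw [Set.indicator_of_notMem hs]
      simp [hz]
  rw [h1, h2, h3]
  calc (∫ s : Fin k → ℝ, ∫ t : ℝ, g (e (t, s)))
      = ∫ s : Fin k → ℝ, Set.indicator (simplexSet k)
          (fun s' => ∫ t in Set.Icc (sext k s' (ℓ + 1)) (sext k s' ℓ), f (i.insertNth t s')) s := by
        congr 1
        funext s
        exact h4 s
    _ = ∫ s in simplexSet k, ∫ t in Set.Icc (sext k s (ℓ + 1)) (sext k s ℓ),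
          f (i.insertNth t s) := integral_indicator (measurableSet_simplexSet k)

/-- for `α ≠ 1`, `0 ≤ ℓ ≤ k`, positive `r_0,…,r_{k+1}` with `r_ℓ ≠ r_{ℓ+1}`,
`[I_{α,k}(…,r̂_ℓ,…) − I_{α,k}(…,r̂_{ℓ+1},…)]/(r_{ℓ+1}−r_ℓ) = −α · I_{α+1,k+1}(r_0,…,r_{k+1})`. -/
theorem finite_difference_Ifun (α : ℝ) (hα : α ≠ 1) (k ℓ : ℕ) (hℓ : ℓ ≤ k) (r : ℕ → ℝ)
    (hr : ∀ j ≤ k + 1, 0 < r j) (hne : r ℓ ≠ r (ℓ + 1)) :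
    (Ifun α k (fun m => if m < ℓ then r m else r (m + 1))
        - Ifun α k (fun m => if m < ℓ + 1 then r m else r (m + 1))) / (r (ℓ + 1) - r ℓ)
      = -α * Ifun (α + 1) (k + 1) r := by
  classical
  by_cases hα0 : α = 0
  · subst hα0
    simp [Ifun]
  · have hc : r (ℓ + 1) - r ℓ ≠ 0 := sub_ne_zero_of_ne (Ne.symm hne)
    set c : ℝ := r (ℓ + 1) - r ℓ with hcdef
    set r1 : ℕ → ℝ := fun m => if m < ℓ + 1 then r m else r (m + 1) with hr1
    set r2 : ℕ → ℝ := fun m => if m < ℓ then r m else r (m + 1) with hr2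
    have hr1pos : ∀ j ≤ k, 0 < r1 j := by
      intro j hj
      simp only [hr1]
      split
      · exact hr j (by omega)
      · exact hr (j + 1) (by omega)
    have hr2pos : ∀ j ≤ k, 0 < r2 j := by
      intro j hj
      simp only [hr2]
      split
      · exact hr j (by omega)
      · exact hr (j + 1) (by omega)
    have hfub := fubini_simplex (k := k) (ℓ := ℓ) hℓ
      (fun x => wsum (k + 1) x r ^ (-(α + 1)))
      (integrableOn_rpow_wsum (k := k + 1) hr (-(α + 1)))
    have hIk1 : Ifun (α + 1) (k + 1) r
        = ∫ s in simplexSet k,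
            (wsum k s r2 ^ (-α) - wsum k s r1 ^ (-α)) / (-α * c) := by
      rw [Ifun, hfub]
      refine setIntegral_congr_fun (measurableSet_simplexSet k) fun s hs => ?_
      have hA : 0 < wsum k s r1 := wsum_pos hs hr1pos
      have hB : 0 < wsum k s r2 := wsum_pos hs hr2pos
      set a : ℝ := sext k s (ℓ + 1) with ha
      set b : ℝ := sext k s ℓ with hb
      have hab : a ≤ b := sext_antitone hs ℓ (ℓ + 1) (by omega)
      set A : ℝ := wsum k s r1 with hAdef
      set B : ℝ := wsum k s r2 with hBdef
      have hBA : B = A + (b - a) * c := wsum_hat_sub hℓ s r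
      calc (∫ t in Set.Icc a b,
              wsum (k + 1) ((⟨ℓ, by omega⟩ : Fin (k + 1)).insertNth t s) r ^ (-(α + 1)))
          = ∫ t in Set.Icc a b, (c * t + (A - a * c)) ^ (-(α + 1)) := by
            refine setIntegral_congr_fun measurableSet_Icc fun t _ => ?_
            rw [wsum_insertNth hℓ t s r, ← hr1, ← ha, ← hAdef, ← hcdef]
            congr 1
            ring
        _ = ∫ t in a..b, (c * t + (A - a * c)) ^ (-(α + 1)) := by
            rw [intervalIntegral.integral_of_le hab, integral_Icc_eq_integral_Ioc]
        _ = c⁻¹ • ∫ u in (c * a + (A - a * c))..(c * b + (A - a * c)), u ^ (-(α + 1)) :=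
            intervalIntegral.integral_comp_mul_add (fun u => u ^ (-(α + 1))) hc _
        _ = c⁻¹ • ∫ u in A..B, u ^ (-(α + 1)) := by
            have e1 : c * a + (A - a * c) = A := by ring
            have e2 : c * b + (A - a * c) = B := by rw [hBA]; ring
            rw [e1, e2]
        _ = (B ^ (-α) - A ^ (-α)) / (-α * c) := by
            rw [integral_rpow (Or.inr ⟨by intro h; apply hα0; linarith,
              Set.notMem_uIcc_of_lt hA hB⟩)]
            have e3 : -(α + 1) + 1 = -α := by ring
            rw [e3, smul_eq_mul, inv_mul_eq_div, div_div]
    have hint1 : IntegrableOn (fun s => wsum k s r1 ^ (-α)) (simplexSet k) :=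
      integrableOn_rpow_wsum hr1pos (-α)
    have hint2 : IntegrableOn (fun s => wsum k s r2 ^ (-α)) (simplexSet k) :=
      integrableOn_rpow_wsum hr2pos (-α)
    have hIk1' : Ifun (α + 1) (k + 1) r
        = (Ifun α k r2 - Ifun α k r1) / (-α * c) := by
      rw [hIk1, integral_div, integral_sub hint2 hint1]
      rfl
    rw [hIk1']
    field_simp

end
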